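/- Assume ℙ(S_F) = 1. Then for every Borel probability measure μ on Σ_k × M with marginal ℙ, the sequence F_*^n μ converges weakly to v_ℙ as n → ∞, i.e., ∫ φ d(F_*^n μ) → ∫ φ dv_ℙ for every bounded continuous φ : Σ_k × M → ℝ. -/

import Mathlib

open Set Function Filter Topology MeasureTheory

noncomputable section

/-- The shift map on two-sided sequences. -/
def shiftMap {k : ℕ} (θ : ℤ → Fin k) : ℤ → Fin k := fun i => θ (i + 1)

/-- The step skew product `F(θ, x) = (σ θ, f_{θ₀} x)`. -/
def skewProd {k : ℕ} {M : Type*} (f : Fin k → M → M) :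
    (ℤ → Fin k) × M → (ℤ → Fin k) × M :=
  fun p => (shiftMap p.1, f (p.1 0) p.2)

/-- Backward composition `f_{θ₋₁} ∘ ⋯ ∘ f_{θ₋ₙ}`. -/
def bcomp {k : ℕ} {M : Type*} (f : Fin k → M → M) (θ : ℤ → Fin k) : ℕ → M → M
  | 0 => id
  | n + 1 => bcomp f θ n ∘ f (θ (-((n : ℤ) + 1)))

/-- The spine `I_θ = ⋂_{n ≥ 1} f_{θ₋₁} ∘ ⋯ ∘ f_{θ₋ₙ}(M)`. -/
def spine {k : ℕ} {M : Type*} (f : Fin k → M → M) (θ : ℤ → Fin k) : Set M :=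
  ⋂ n : ℕ, bcomp f θ (n + 1) '' Set.univ

/-- The set of weakly hyperbolic sequences: those `θ` whose spine is a singleton. -/
def weakHyp {k : ℕ} {M : Type*} (f : Fin k → M → M) : Set (ℤ → Fin k) :=
  {θ | ∃ x : M, spine f θ = {x}}

/-- The ω-limit set of a point `z` under iteration of `F`: limits of subsequences
`F^{n_j}(z)` with `n_j → ∞`. -/
def omegaLim {α : Type*} [TopologicalSpace α] (F : α → α) (z : α) : Set α :=
  {w | ∃ φ : ℕ → ℕ, StrictMono φ ∧ Tendsto (fun j => F^[φ j] z) atTop (𝓝 w)}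

/-!
With `θ' = σⁿ θ`, the fibre coordinate of `Fⁿ (θ, x)` lies in the compact set
`f_{θ'₋₁} ∘ ⋯ ∘ f_{θ'₋ₙ}(M)`, which also contains `ρ θ'` and whose diameter tends to `0` for
weakly hyperbolic `θ'`. Since `(θ, x) ↦ σⁿ θ` carries `μ` to the invariant measure `ℙ`, the
distance between `∫ φ d(Fⁿ_* μ)` and `∫ φ dv_ℙ` is at most `ε + C ∫ diam(…) dℙ` (uniform
continuity of `φ` along the fibres), and that integral tends to `0` by dominated convergence.
-/

namespace Metric

variable {X : Type*} [MetricSpace X]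

theorem tendsto_diam_of_iInter_eq_singleton {K : ℕ → Set X} (hK : Antitone K)
    (hKc : ∀ n, IsCompact (K n)) {x : X} (hx : ⋂ n, K n = {x}) :
    Tendsto (fun n => diam (K n)) atTop (𝓝 0) := by
  rw [Metric.tendsto_atTop]
  intro ε hε
  obtain ⟨N, hN⟩ := exists_subset_nhds_of_isCompact' hK.directed_ge hKc
    (fun n => (hKc n).isClosed)
    (fun y hy => by rw [hx] at hy; rw [hy]; exact ball_mem_nhds x (by positivity : 0 < ε / 3))
  refine ⟨N, fun n hn => ?_⟩
  have hdiam : diam (K n) ≤ 2 * (ε / 3) :=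
    (diam_mono ((hK hn).trans hN) isBounded_ball).trans (diam_ball (by positivity))
  rw [Real.dist_eq, sub_zero, abs_of_nonneg diam_nonneg]
  linarith

theorem exists_iInter_eq_singleton_iff_tendsto_diam {K : ℕ → Set X} (hK : Antitone K)
    (hKc : ∀ n, IsCompact (K n)) (hKne : ∀ n, (K n).Nonempty) :
    (∃ x, ⋂ n, K n = {x}) ↔ Tendsto (fun n => diam (K n)) atTop (𝓝 0) := by
  refine ⟨fun ⟨x, hx⟩ => tendsto_diam_of_iInter_eq_singleton hK hKc hx, fun h => ?_⟩
  refine exists_eq_singleton_iff_nonempty_subsingleton.2 ⟨?_, ?_⟩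
  · exact IsCompact.nonempty_iInter_of_sequence_nonempty_isCompact_isClosed K
      (fun n => hK n.le_succ) hKne (hKc 0) fun n => (hKc n).isClosed
  · intro a ha b hb
    have hle : ∀ n, dist a b ≤ diam (K n) := fun n =>
      dist_le_diam_of_mem (hKc n).isBounded (mem_iInter.1 ha n) (mem_iInter.1 hb n)
    exact dist_le_zero.1 (ge_of_tendsto' h hle)

end Metric

theorem Filter.tendsto_of_dist_le_add_mul {ι α : Type*} [PseudoMetricSpace α] {l : Filter ι}
    {a : ι → α} {L : α} {b : ι → ℝ} (hb : Tendsto b l (𝓝 0))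
    (h : ∀ ε > 0, ∃ C, ∀ i, dist (a i) L ≤ ε + C * b i) : Tendsto a l (𝓝 L) := by
  refine Metric.tendsto_nhds.2 fun ε hε => ?_
  obtain ⟨C, hC⟩ := h (ε / 2) (half_pos hε)
  have hCb : ∀ᶠ i in l, C * b i < ε / 2 := by
    simpa using (hb.const_mul C).eventually (gt_mem_nhds (by simpa using half_pos hε))
  filter_upwards [hCb] with i hi
  linarith [hC i]

theorem Continuous.exists_abs_sub_le_add_mul_dist {X M : Type*} [TopologicalSpace X]
    [CompactSpace X] [MetricSpace M] [CompactSpace M] {φ : X × M → ℝ} (hφ : Continuous φ)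
    {ε : ℝ} (hε : 0 < ε) :
    ∃ C ≥ 0, ∀ θ a b, |φ (θ, a) - φ (θ, b)| ≤ ε + C * dist a b := by
  let Φ : C(M, C(X, ℝ)) := ContinuousMap.curry ⟨φ ∘ Prod.swap, hφ.comp continuous_swap⟩
  obtain ⟨δ, hδ, hΦ⟩ := Metric.uniformContinuous_iff.1
    (CompactSpace.uniformContinuous_of_continuous Φ.continuous) ε hε
  let B := ‖(⟨φ, hφ⟩ : C(X × M, ℝ))‖
  have hB : ∀ p, |φ p| ≤ B := fun p => ContinuousMap.norm_coe_le_norm ⟨φ, hφ⟩ p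
  refine ⟨2 * B / δ, by positivity, fun θ a b => ?_⟩
  by_cases hab : dist a b < δ
  · have : |φ (θ, a) - φ (θ, b)| < ε :=
      (ContinuousMap.dist_apply_le_dist θ).trans_lt (hΦ hab)
    have : 0 ≤ 2 * B / δ * dist a b := by positivity
    linarith
  · calc |φ (θ, a) - φ (θ, b)| ≤ B + B := (abs_sub _ _).trans (add_le_add (hB _) (hB _))
      _ = 2 * B / δ * δ := by field_simp; ring
      _ ≤ 2 * B / δ * dist a b := by gcongr; exact not_lt.1 hab
      _ ≤ ε + 2 * B / δ * dist a b := by linarith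

namespace MeasureTheory

theorem Measure.map_iterate {α : Type*} [MeasurableSpace α] {F : α → α} (hF : Measurable F)
    (μ : Measure α) (n : ℕ) : (Measure.map F)^[n] μ = Measure.map F^[n] μ := by
  induction n with
  | zero => simp
  | succ n ih =>
    rw [iterate_succ_apply', ih, Measure.map_map hF (hF.iterate n), ← iterate_succ']

theorem MeasurePreserving.abs_integral_sub_integral_le {Z Y : Type*} [MeasurableSpace Z]
    [MeasurableSpace Y] {μ : Measure Z} {ν : Measure Y} {π : Z → Y}
    (hπ : MeasurePreserving π μ ν) {u : Z → ℝ} {v w : Y → ℝ} (hu : Integrable u μ)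
    (hv : Integrable v ν) (hw : Integrable w ν) (huv : ∀ᵐ z ∂μ, |u z - v (π z)| ≤ w (π z)) :
    |∫ z, u z ∂μ - ∫ y, v y ∂ν| ≤ ∫ y, w y ∂ν := by
  have hvπ : Integrable (fun z => v (π z)) μ := hπ.integrable_comp_of_integrable hv
  have hcomp : ∀ g : Y → ℝ, AEStronglyMeasurable g ν → ∫ z, g (π z) ∂μ = ∫ y, g y ∂ν :=
    fun g hg => by
      rw [← hπ.map_eq] at hg ⊢
      exact (integral_map hπ.measurable.aemeasurable hg).symm
  rw [← hcomp v hv.1, ← hcomp w hw.1, ← integral_sub hu hvπ]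
  exact (abs_integral_le_integral_abs).trans
    (integral_mono_ae (hu.sub hvπ).abs (hπ.integrable_comp_of_integrable hw) huv)

end MeasureTheory

section SkewProduct

variable {k : ℕ} {M : Type*}

theorem shiftMap_iterate_apply (θ : ℤ → Fin k) (n : ℕ) (i : ℤ) :
    shiftMap^[n] θ i = θ (i + n) := by
  induction n generalizing θ with
  | zero => simp
  | succ n ih =>
    rw [iterate_succ_apply, ih]
    simp only [shiftMap, Nat.cast_succ, add_assoc, add_comm (n : ℤ)]

theorem continuous_shiftMap : Continuous (shiftMap (k := k)) :=
  continuous_pi fun i => continuous_apply (i + 1)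

variable (f : Fin k → M → M)

theorem skewProd_iterate (θ : ℤ → Fin k) (x : M) (n : ℕ) :
    (skewProd f)^[n] (θ, x) = (shiftMap^[n] θ, bcomp f (shiftMap^[n] θ) n x) := by
  induction n generalizing θ x with
  | zero => rfl
  | succ n ih =>
    rw [iterate_succ_apply, skewProd, ih, ← iterate_succ_apply]
    congr 1
    simp only [bcomp, comp_apply, shiftMap_iterate_apply]
    congr 3
    push_cast
    ring

theorem isLocallyConstant_bcomp (n : ℕ) : IsLocallyConstant (fun θ : ℤ → Fin k => bcomp f θ n) := by
  induction n with
  | zero => exact IsLocallyConstant.const id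
  | succ n ih =>
    have hcoord : IsLocallyConstant (fun θ : ℤ → Fin k => θ (-((n : ℤ) + 1))) :=
      (IsLocallyConstant.iff_continuous _).2 (continuous_apply _)
    exact ih.comp₂ hcoord fun g i => g ∘ f i

theorem antitone_range_bcomp (θ : ℤ → Fin k) : Antitone fun n => range (bcomp f θ n) :=
  antitone_nat_of_succ_le fun _ => range_comp_subset_range _ _

theorem spine_eq_iInter_range_bcomp (θ : ℤ → Fin k) : spine f θ = ⋂ n, range (bcomp f θ n) := by
  simp only [spine, image_univ]
  exact (antitone_range_bcomp f θ).iInter_nat_add 1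

variable [MetricSpace M] {f}

theorem continuous_skewProd (hf : ∀ i, Continuous (f i)) : Continuous (skewProd f) := by
  have hfib : Continuous fun q : Fin k × M => f q.1 q.2 := continuous_prod_of_discrete_left.2 hf
  have hsnd : Continuous fun p : (ℤ → Fin k) × M => f (p.1 0) p.2 :=
    hfib.comp (f := fun p : (ℤ → Fin k) × M => (p.1 0, p.2)) (by fun_prop)
  exact (continuous_shiftMap.comp continuous_fst).prodMk hsnd

theorem continuous_bcomp (hf : ∀ i, Continuous (f i)) (θ : ℤ → Fin k) (n : ℕ) :
    Continuous (bcomp f θ n) := by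
  induction n with
  | zero => exact continuous_id
  | succ n ih => exact ih.comp (hf _)

theorem continuous_diam_range_bcomp (n : ℕ) :
    Continuous fun θ : ℤ → Fin k => Metric.diam (range (bcomp f θ n)) :=
  ((isLocallyConstant_bcomp f n).comp fun g => Metric.diam (range g)).continuous

variable [CompactSpace M]

theorem isCompact_range_bcomp (hf : ∀ i, Continuous (f i)) (θ : ℤ → Fin k) (n : ℕ) :
    IsCompact (range (bcomp f θ n)) :=
  isCompact_range (continuous_bcomp hf θ n)

theorem weakHyp_eq_setOf_tendsto_diam [Nonempty M] (hf : ∀ i, Continuous (f i)) :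
    weakHyp f = {θ | Tendsto (fun n => Metric.diam (range (bcomp f θ n))) atTop (𝓝 0)} := by
  ext θ
  simp only [weakHyp, mem_ofPred_eq, spine_eq_iInter_range_bcomp]
  exact Metric.exists_iInter_eq_singleton_iff_tendsto_diam (antitone_range_bcomp f θ)
    (isCompact_range_bcomp hf θ) fun n => range_nonempty _

theorem measurableSet_weakHyp [Nonempty M] (hf : ∀ i, Continuous (f i)) :
    MeasurableSet (weakHyp f) := by
  rw [weakHyp_eq_setOf_tendsto_diam hf]
  exact measurableSet_tendsto _ fun n => (continuous_diam_range_bcomp n).measurable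

theorem dist_bcomp_le_diam (hf : ∀ i, Continuous (f i)) {θ : ℤ → Fin k} {y : M}
    (hy : spine f θ = {y}) (n : ℕ) (x : M) :
    dist (bcomp f θ n x) y ≤ Metric.diam (range (bcomp f θ n)) := by
  have hy' : y ∈ range (bcomp f θ n) := by
    rw [spine_eq_iInter_range_bcomp] at hy
    exact mem_iInter.1 (hy.symm ▸ mem_singleton y) n
  exact Metric.dist_le_diam_of_mem (isCompact_range_bcomp hf θ n).isBounded (mem_range_self x) hy'

theorem norm_diam_range_bcomp_le (θ : ℤ → Fin k) (n : ℕ) :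
    ‖Metric.diam (range (bcomp f θ n))‖ ≤ Metric.diam (univ : Set M) := by
  rw [Real.norm_of_nonneg Metric.diam_nonneg]
  exact Metric.diam_mono (subset_univ _) isCompact_univ.isBounded

theorem tendsto_integral_diam_range_bcomp (hf : ∀ i, Continuous (f i))
    {ℙ : Measure (ℤ → Fin k)} [IsFiniteMeasure ℙ] (hW : ∀ᵐ θ ∂ℙ, θ ∈ weakHyp f) :
    Tendsto (fun n => ∫ θ, Metric.diam (range (bcomp f θ n)) ∂ℙ) atTop (𝓝 0) := by
  have hlim : ∀ᵐ θ ∂ℙ, Tendsto (fun n => Metric.diam (range (bcomp f θ n))) atTop (𝓝 0) :=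
    hW.mono fun θ ⟨_, hx⟩ => Metric.tendsto_diam_of_iInter_eq_singleton
      (antitone_range_bcomp f θ) (isCompact_range_bcomp hf θ)
      ((spine_eq_iInter_range_bcomp f θ).symm.trans hx)
  simpa using tendsto_integral_of_dominated_convergence _
    (fun n => (continuous_diam_range_bcomp n).aestronglyMeasurable) (integrable_const _)
    (fun n => ae_of_all _ fun θ => norm_diam_range_bcomp_le θ n) hlim

end SkewProduct

theorem dist_integral_iterate_map_skewProd_le {k : ℕ} {M : Type*} [MetricSpace M]
    [CompactSpace M] [MeasurableSpace M] [BorelSpace M] {f : Fin k → M → M}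
    (hf : ∀ i, Continuous (f i)) {ℙ : Measure (ℤ → Fin k)} [IsProbabilityMeasure ℙ]
    (hσ : MeasurePreserving shiftMap ℙ ℙ) {ρ : (ℤ → Fin k) → M}
    (hρ : ∀ᵐ θ ∂ℙ, spine f θ = {ρ θ}) (hρm : AEMeasurable (fun θ => (θ, ρ θ)) ℙ)
    {μ : Measure ((ℤ → Fin k) × M)} [IsFiniteMeasure μ] (hμ : Measure.map Prod.fst μ = ℙ)
    {φ : (ℤ → Fin k) × M → ℝ} (hφ : Continuous φ) {ε C : ℝ} (hC0 : 0 ≤ C)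
    (hC : ∀ θ a b, |φ (θ, a) - φ (θ, b)| ≤ ε + C * dist a b) (n : ℕ) :
    dist (∫ z, φ z ∂((Measure.map (skewProd f))^[n] μ))
        (∫ z, φ z ∂(Measure.map (fun θ => (θ, ρ θ)) ℙ))
      ≤ ε + C * ∫ θ, Metric.diam (range (bcomp f θ n)) ∂ℙ := by
  have hF : Measurable (skewProd f) := (continuous_skewProd hf).measurable
  obtain ⟨B, hB⟩ := isCompact_univ.exists_bound_of_continuousOn hφ.continuousOn
  have hπ : MeasurePreserving (fun z => shiftMap^[n] z.1) μ ℙ :=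
    (hσ.iterate n).comp ⟨measurable_fst, hμ⟩
  have hclose : ∀ᵐ z ∂μ, |φ ((skewProd f)^[n] z) - φ (shiftMap^[n] z.1, ρ (shiftMap^[n] z.1))|
      ≤ ε + C * Metric.diam (range (bcomp f (shiftMap^[n] z.1) n)) := by
    filter_upwards [hπ.quasiMeasurePreserving.ae hρ] with ⟨θ, x⟩ hθ
    rw [skewProd_iterate]
    exact (hC _ _ _).trans (by gcongr; exact dist_bcomp_le_diam hf hθ n x)
  have hD : Integrable (fun θ => Metric.diam (range (bcomp f θ n))) ℙ :=
    .of_bound (continuous_diam_range_bcomp n).aestronglyMeasurable _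
      (ae_of_all _ fun θ => norm_diam_range_bcomp_le θ n)
  have key : |∫ z, φ ((skewProd f)^[n] z) ∂μ - ∫ θ, φ (θ, ρ θ) ∂ℙ|
      ≤ ∫ θ, (ε + C * Metric.diam (range (bcomp f θ n))) ∂ℙ := hπ.abs_integral_sub_integral_le
    (.of_bound (hφ.comp ((continuous_skewProd hf).iterate n)).aestronglyMeasurable B
      (ae_of_all _ fun z => hB _ (mem_univ _)))
    (.of_bound (hφ.measurable.comp_aemeasurable hρm).aestronglyMeasurable B
      (ae_of_all _ fun θ => hB _ (mem_univ _)))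
    ((integrable_const ε).add (hD.const_mul C)) hclose
  rw [integral_add (integrable_const ε) (hD.const_mul C), integral_const_mul, integral_const,
    probReal_univ, one_smul] at key
  rwa [Real.dist_eq, Measure.map_iterate hF, integral_map (hF.iterate n).aemeasurable
    hφ.aestronglyMeasurable, integral_map hρm hφ.aestronglyMeasurable]

theorem pushforward_tendsto_attracting_measure_general
    {k : ℕ} {M : Type*} [MetricSpace M] [CompactSpace M] [Nonempty M]
    [MeasurableSpace M] [BorelSpace M]
    (f : Fin k → M → M) (hf : ∀ i, Continuous (f i))
    (ℙ : Measure (ℤ → Fin k)) [IsProbabilityMeasure ℙ]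
    (hinv : Measure.map shiftMap ℙ = ℙ)
    (hS : ℙ (weakHyp f) = 1)
    (ρ : (ℤ → Fin k) → M) (hρ : ∀ θ ∈ weakHyp f, spine f θ = {ρ θ})
    (hρm : AEMeasurable (fun θ => (θ, ρ θ) : (ℤ → Fin k) → (ℤ → Fin k) × M) ℙ)
    (μ : Measure ((ℤ → Fin k) × M)) [IsProbabilityMeasure μ]
    (hμ : Measure.map Prod.fst μ = ℙ)
    (φ : (ℤ → Fin k) × M → ℝ) (hφ : Continuous φ) :
    Tendsto (fun n : ℕ => ∫ z, φ z ∂ ((Measure.map (skewProd f))^[n] μ)) atTop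
      (𝓝 (∫ z, φ z ∂ (Measure.map (fun θ => (θ, ρ θ)) ℙ))) := by
  have hσ : MeasurePreserving shiftMap ℙ ℙ := ⟨continuous_shiftMap.measurable, hinv⟩
  have hW : ∀ᵐ θ ∂ℙ, θ ∈ weakHyp f :=
    mem_ae_iff.2 ((prob_compl_eq_zero_iff (measurableSet_weakHyp hf)).2 hS)
  refine tendsto_of_dist_le_add_mul (tendsto_integral_diam_range_bcomp hf hW) fun ε hε => ?_
  obtain ⟨C, hC0, hC⟩ := hφ.exists_abs_sub_le_add_mul_dist hε
  exact ⟨C, dist_integral_iterate_map_skewProd_le hf hσ (hW.mono hρ) hρm hμ hφ hC0 hC⟩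

/-- Global attractor of measures: if `ℙ(S_F) = 1`, then for every Borel probability
measure `μ` on `Σ_k × M` with marginal `ℙ`, the pushforwards `F_*ⁿ μ` converge weakly to
`v_ℙ = ρ̂_* ℙ`, where `ρ̂(θ) = (θ, ρ(θ))`. -/
theorem pushforward_tendsto_attracting_measure
    {k : ℕ} (hk : 1 ≤ k) {M : Type*} [MetricSpace M] [CompactSpace M] [Nonempty M]
    [MeasurableSpace M] [BorelSpace M]
    (f : Fin k → M → M) (hf : ∀ i, Continuous (f i))
    (ℙ : Measure (ℤ → Fin k)) [IsProbabilityMeasure ℙ]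
    (hinv : Measure.map shiftMap ℙ = ℙ)
    (hS : ℙ (weakHyp f) = 1)
    (ρ : (ℤ → Fin k) → M) (hρ : ∀ θ ∈ weakHyp f, spine f θ = {ρ θ})
    (hρm : AEMeasurable (fun θ => (θ, ρ θ) : (ℤ → Fin k) → (ℤ → Fin k) × M) ℙ)
    (μ : Measure ((ℤ → Fin k) × M)) [IsProbabilityMeasure μ]
    (hμ : Measure.map Prod.fst μ = ℙ)
    (φ : (ℤ → Fin k) × M → ℝ) (hφb : ∃ Cb, ∀ z, |φ z| ≤ Cb) (hφ : Continuous φ) :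
    Tendsto (fun n : ℕ => ∫ z, φ z ∂ ((Measure.map (skewProd f))^[n] μ)) atTop
      (𝓝 (∫ z, φ z ∂ (Measure.map (fun θ => (θ, ρ θ)) ℙ))) :=
  pushforward_tendsto_attracting_measure_general f hf ℙ hinv hS ρ hρ hρm μ hμ φ hφ

end
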